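/- arXiv:2504.11628 — 4 statements merged into one kernel-verified Lean document; each statement's English description precedes it below -/
import Mathlib

section
/- Let G be a star-like graph with 1 branch (so V = K ∪ L₁ with branch parametrization φ₁), let a be a symmetric edge-weight function with a(u,v) > 0 for all adjacent u, v, and let b : V → ℝ. Define J pointwise on functions f : V → ℂ by (Jf)(v) = Σ_{w ∼ v} a(v,w) f(w) + b(v) f(v), and fix v₀ ∈ K. If ψ : V → ℂ satisfies ψ(v) = 0 for every v ∈ K and (Jᵏψ)(v₀) = 0 for every integer k ≥ 0, then ψ is identically zero. Equivalently, any function ψ with (Jᵏψ)(v₀) = 0 for all k ≥ 0 is uniquely determined on the branch L₁ by its values on K. -/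
/-- A star-like graph with `m` branches (see the paper): compact component `K`, injective
branch parametrizations `φ i`, branches pairwise disjoint, `L_i ∩ K = {φ i 0}`, for `j ≥ 1`
the neighbors of `φ i j` are exactly `φ i (j-1)` and `φ i (j+1)`, and the neighbors of
`φ i 0` lie in `K ∪ {φ i 1}`. -/
structure StarLike {V : Type*} (G : SimpleGraph V) (m : ℕ) where
  K : Finset V
  φ : Fin m → ℕ → V
  connected : G.Connected
  locFin : ∀ v : V, (G.neighborSet v).Finite
  φ_inj : ∀ i, Function.Injective (φ i)
  cover : ∀ v : V, v ∈ K ∨ ∃ i n, v = φ i n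
  branch_disjoint : ∀ i j, i ≠ j → ∀ p q, φ i p ≠ φ j q
  branch_inter_K : ∀ i n, φ i n ∈ K ↔ n = 0
  adj_branch : ∀ i (j : ℕ), 1 ≤ j → ∀ w, G.Adj (φ i j) w ↔ w = φ i (j - 1) ∨ w = φ i (j + 1)
  adj_base : ∀ i w, G.Adj (φ i 0) w → w ∈ K ∨ w = φ i 1

/-- The Jacobi-type operator `J` acting pointwise on all functions `f : V → ℂ`:
`(Jf)(v) = Σ_{w ∼ v} a(v,w) f(w) + b(v) f(v)`. -/
noncomputable def Jpt {V : Type*} (G : SimpleGraph V) (hfin : ∀ v : V, (G.neighborSet v).Finite)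
    (a : V → V → ℝ) (b : V → ℝ) (f : V → ℂ) : V → ℂ :=
  fun v => (∑ w ∈ (hfin v).toFinset, (a v w : ℂ) * f w) + (b v : ℂ) * f v

/-! Suppose `ψ` vanishes on `K` and on `φ 0 0, …, φ 0 (n-1)`. Every walk leaving this region
passes through `φ 0 n`, so the moment `(J^d ψ)(v₀)` with `d = dist v₀ (φ 0 n)` equals `ψ (φ 0 n)`
times the total weight of the geodesic walks from `v₀` to `φ 0 n`, which is positive as `a > 0`.
Vanishing moments therefore kill `ψ` along the branch, by induction on `n`. -/

section WalkWeight

variable {V : Type*} {G : SimpleGraph V} {hfin : ∀ v : V, (G.neighborSet v).Finite}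
  {a : V → V → ℝ}

open Classical in
/-- The total weight of the walks of length `k` from `v` to `t`, a walk `v₀ v₁ … v_k` having
weight `∏ a(vᵢ, vᵢ₊₁)`. -/
noncomputable def walkWeight (G : SimpleGraph V) (hfin : ∀ v : V, (G.neighborSet v).Finite)
    (a : V → V → ℝ) (t : V) : ℕ → V → ℝ
  | 0 => fun v => if v = t then 1 else 0
  | k + 1 => fun v => ∑ w ∈ (hfin v).toFinset, a v w * walkWeight G hfin a t k w

lemma walkWeight_nonneg (hpos : ∀ u v, G.Adj u v → 0 < a u v) (t : V) (k : ℕ) (v : V) :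
    0 ≤ walkWeight G hfin a t k v := by
  induction k generalizing v with
  | zero => simp only [walkWeight]; split <;> norm_num
  | succ k ih =>
    exact Finset.sum_nonneg fun w hw =>
      mul_nonneg (hpos _ _ (by simpa using hw)).le (ih w)

lemma SimpleGraph.Adj.dist_le_dist_add_one {v w : V} (h : G.Adj v w) (t : V) :
    G.dist v t ≤ G.dist w t + 1 := by
  have := h.reachable.dist_triangle_left t
  rw [SimpleGraph.dist_eq_one_iff_adj.mpr h] at this
  omega

lemma walkWeight_eq_zero_of_lt_dist {t : V} {k : ℕ} {v : V} (hk : k < G.dist v t) :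
    walkWeight G hfin a t k v = 0 := by
  induction k generalizing v with
  | zero =>
    have hvt : v ≠ t := by rintro rfl; simp at hk
    simp [walkWeight, hvt]
  | succ k ih =>
    refine Finset.sum_eq_zero fun w hw => ?_
    have := (by simpa using hw : G.Adj v w).dist_le_dist_add_one t
    rw [ih (by omega), mul_zero]

lemma walkWeight_dist_pos (hpos : ∀ u v, G.Adj u v → 0 < a u v) {v t : V}
    (h : G.Reachable v t) : 0 < walkWeight G hfin a t (G.dist v t) v := by
  obtain ⟨p, hp⟩ := h.exists_walk_length_eq_dist
  clear h
  induction p with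
  | nil => simp [walkWeight]
  | @cons v w t hvw q ih =>
    have hw : G.dist w t = q.length := by
      have := hvw.dist_le_dist_add_one t
      have := SimpleGraph.dist_le q
      simp only [SimpleGraph.Walk.length_cons] at hp
      omega
    rw [← hp, SimpleGraph.Walk.length_cons, ← hw]
    exact Finset.sum_pos' (fun x hx => mul_nonneg (hpos _ _ (by simpa using hx)).le
        (walkWeight_nonneg hpos t _ x))
      ⟨w, by simpa using hvw, mul_pos (hpos _ _ hvw) (ih hw.symm)⟩

/-- The diagonal `b`-terms drop out since they shorten the walks, and `walkWeight` vanishes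
below the distance. -/
lemma Jpt_iterate_apply_eq_walkWeight_mul (b : V → ℝ) {U : Set V} {t : V} {f : V → ℂ}
    (hU : ∀ v ∈ U, v ≠ t → ∀ w, G.Adj v w → w ∈ U) (hf : ∀ u ∈ U, u ≠ t → f u = 0)
    {k : ℕ} {v : V} (hv : v ∈ U) (hk : k ≤ G.dist v t) :
    (Jpt G hfin a b)^[k] f v = walkWeight G hfin a t k v * f t := by
  induction k generalizing v with
  | zero =>
    by_cases hvt : v = t
    · simp [walkWeight, hvt]
    · simp [walkWeight, hvt, hf v hv hvt]
  | succ k ih =>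
    have hvt : v ≠ t := by rintro rfl; simp at hk
    have hself : (Jpt G hfin a b)^[k] f v = 0 := by
      rw [ih hv (by omega), walkWeight_eq_zero_of_lt_dist (by omega), Complex.ofReal_zero,
        zero_mul]
    have hnbr : ∀ w ∈ (hfin v).toFinset, (a v w : ℂ) * (Jpt G hfin a b)^[k] f w
        = ((a v w * walkWeight G hfin a t k w : ℝ) : ℂ) * f t := by
      intro w hw
      have hvw : G.Adj v w := by simpa using hw
      have := hvw.dist_le_dist_add_one t
      rw [ih (hU v hv hvt w hvw) (by omega), Complex.ofReal_mul, mul_assoc]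
    rw [Function.iterate_succ_apply', Jpt, hself, mul_zero, add_zero, Finset.sum_congr rfl hnbr,
      ← Finset.sum_mul, ← Complex.ofReal_sum]
    rfl

lemma apply_eq_zero_of_Jpt_iterate_dist_eq_zero (b : V → ℝ)
    (hpos : ∀ u v, G.Adj u v → 0 < a u v) {U : Set V} {t : V} {f : V → ℂ}
    (hU : ∀ v ∈ U, v ≠ t → ∀ w, G.Adj v w → w ∈ U) (hf : ∀ u ∈ U, u ≠ t → f u = 0)
    {v : V} (hv : v ∈ U) (hreach : G.Reachable v t)
    (hmom : (Jpt G hfin a b)^[G.dist v t] f v = 0) : f t = 0 := by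
  rw [Jpt_iterate_apply_eq_walkWeight_mul b hU hf hv le_rfl] at hmom
  have hpos' : (walkWeight G hfin a t (G.dist v t) v : ℂ) ≠ 0 := by
    exact_mod_cast (walkWeight_dist_pos hpos hreach).ne'
  exact (mul_eq_zero.mp hmom).resolve_left hpos'

end WalkWeight

noncomputable def Jpt.addMonoidHom {V : Type*} (G : SimpleGraph V)
    (hfin : ∀ v : V, (G.neighborSet v).Finite) (a : V → V → ℝ) (b : V → ℝ) :
    (V → ℂ) →+ (V → ℂ) where
  toFun := Jpt G hfin a b
  map_zero' := by funext v; simp [Jpt]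
  map_add' f g := by
    funext v
    simp only [Jpt, Pi.add_apply, mul_add, Finset.sum_add_distrib]
    ring

namespace StarLike

variable {V : Type*} {G : SimpleGraph V} (S : StarLike G 1)

lemma φ_zero_mem_K : S.φ 0 0 ∈ S.K := (S.branch_inter_K 0 0).mpr rfl

lemma adj_mem_K_or_eq_φ_one {v w : V} (hv : v ∈ S.K) (h : G.Adj v w) :
    w ∈ S.K ∨ w = S.φ 0 1 := by
  rcases S.cover w with hw | ⟨i, m, rfl⟩
  · exact Or.inl hw
  obtain rfl : i = 0 := Subsingleton.elim _ _
  match m, S.adj_branch 0 m with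
  | 0, _ => exact Or.inl S.φ_zero_mem_K
  | 1, _ => exact Or.inr rfl
  | m + 2, hadj =>
    rcases (hadj (by omega) v).mp h.symm with rfl | rfl <;>
      simp [S.branch_inter_K] at hv

lemma adj_mem_K_union_image_Iic {n : ℕ} (hn : 1 ≤ n) {v w : V}
    (hv : v ∈ (S.K : Set V) ∪ S.φ 0 '' Set.Iic n) (hvn : v ≠ S.φ 0 n) (h : G.Adj v w) :
    w ∈ (S.K : Set V) ∪ S.φ 0 '' Set.Iic n := by
  have of_K : v ∈ S.K → w ∈ (S.K : Set V) ∪ S.φ 0 '' Set.Iic n := fun hvK =>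
    (S.adj_mem_K_or_eq_φ_one hvK h).imp id fun hw => ⟨1, hn, hw.symm⟩
  rcases hv with hvK | ⟨j, hj, rfl⟩
  · exact of_K hvK
  obtain rfl | hj0 := Nat.eq_zero_or_pos j
  · exact of_K S.φ_zero_mem_K
  have hjn : j < n := lt_of_le_of_ne hj fun hjn => hvn (hjn ▸ rfl)
  rcases (S.adj_branch 0 j hj0 w).mp h with rfl | rfl
  · exact Or.inr ⟨j - 1, by simp only [Set.mem_Iic]; omega, rfl⟩
  · exact Or.inr ⟨j + 1, by simp only [Set.mem_Iic]; omega, rfl⟩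

lemma eq_zero_of_Jpt_iterate_eq_zero (a : V → V → ℝ) (b : V → ℝ)
    (hpos : ∀ u v, G.Adj u v → 0 < a u v) {v₀ : V} (hv₀ : v₀ ∈ S.K) {ψ : V → ℂ}
    (hK : ∀ v ∈ S.K, ψ v = 0) (hmom : ∀ k : ℕ, (Jpt G S.locFin a b)^[k] ψ v₀ = 0) :
    ψ = 0 := by
  have hbranch : ∀ n, ψ (S.φ 0 n) = 0 := by
    intro n
    induction n using Nat.strong_induction_on with
    | _ n ih =>
      obtain rfl | hn := Nat.eq_zero_or_pos n
      · exact hK _ S.φ_zero_mem_K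
      refine apply_eq_zero_of_Jpt_iterate_dist_eq_zero b hpos
        (fun v hv hvn w => S.adj_mem_K_union_image_Iic hn hv hvn) ?_ (Or.inl hv₀)
        (S.connected v₀ _) (hmom _)
      rintro u (huK | ⟨m, hm, rfl⟩) hun
      · exact hK u huK
      · exact ih m (lt_of_le_of_ne hm fun hmn => hun (hmn ▸ rfl))
  funext v
  rcases S.cover v with hv | ⟨i, n, rfl⟩
  · exact hK v hv
  · obtain rfl : i = 0 := Subsingleton.elim _ _
    exact hbranch n

end StarLike

theorem stmt_5_general {V : Type*} (G : SimpleGraph V) (S : StarLike G 1)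
    (a : V → V → ℝ) (b : V → ℝ)
    (hpos : ∀ u v, G.Adj u v → 0 < a u v)
    (v₀ : V) (hv₀ : v₀ ∈ S.K) :
    (∀ ψ : V → ℂ, (∀ v ∈ S.K, ψ v = 0) →
      (∀ k : ℕ, (Jpt G S.locFin a b)^[k] ψ v₀ = 0) → ψ = 0) ∧
    (∀ ψ₁ ψ₂ : V → ℂ, (∀ k : ℕ, (Jpt G S.locFin a b)^[k] ψ₁ v₀ = 0) →
      (∀ k : ℕ, (Jpt G S.locFin a b)^[k] ψ₂ v₀ = 0) →
      (∀ v ∈ S.K, ψ₁ v = ψ₂ v) → ∀ n : ℕ, ψ₁ (S.φ 0 n) = ψ₂ (S.φ 0 n)) := by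
  refine ⟨fun ψ hK hmom => S.eq_zero_of_Jpt_iterate_eq_zero a b hpos hv₀ hK hmom, ?_⟩
  intro ψ₁ ψ₂ h₁ h₂ hK n
  have hdiff : ψ₁ - ψ₂ = 0 := by
    refine S.eq_zero_of_Jpt_iterate_eq_zero a b hpos hv₀ (fun v hv => sub_eq_zero.mpr (hK v hv))
      fun k => ?_
    change (Jpt.addMonoidHom G S.locFin a b)^[k] (ψ₁ - ψ₂) v₀ = 0
    rw [iterate_map_sub, Pi.sub_apply]
    exact sub_eq_zero.mpr ((h₁ k).trans (h₂ k).symm)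
  exact sub_eq_zero.mp (congrFun hdiff (S.φ 0 n))

/-- Let `G` be a star-like graph with one branch, `a` a symmetric edge
weight, positive on adjacent pairs, `b : V → ℝ`, `J` the associated pointwise operator and
`v₀ ∈ K`. If `ψ : V → ℂ` vanishes on `K` and `(Jᵏψ)(v₀) = 0` for every `k ≥ 0`, then
`ψ ≡ 0`. Equivalently, any `ψ` with `(Jᵏψ)(v₀) = 0` for all `k ≥ 0` is uniquely determined
on the branch `L₁` by its values on `K`. -/
theorem stmt_5 {V : Type*} (G : SimpleGraph V) (S : StarLike G 1)
    (a : V → V → ℝ) (b : V → ℝ) (hsymm : ∀ u v, a u v = a v u)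
    (hpos : ∀ u v, G.Adj u v → 0 < a u v)
    (v₀ : V) (hv₀ : v₀ ∈ S.K) :
    (∀ ψ : V → ℂ, (∀ v ∈ S.K, ψ v = 0) →
      (∀ k : ℕ, (Jpt G S.locFin a b)^[k] ψ v₀ = 0) → ψ = 0) ∧
    (∀ ψ₁ ψ₂ : V → ℂ, (∀ k : ℕ, (Jpt G S.locFin a b)^[k] ψ₁ v₀ = 0) →
      (∀ k : ℕ, (Jpt G S.locFin a b)^[k] ψ₂ v₀ = 0) →
      (∀ v ∈ S.K, ψ₁ v = ψ₂ v) → ∀ n : ℕ, ψ₁ (S.φ 0 n) = ψ₂ (S.φ 0 n)) :=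
  stmt_5_general G S a b hpos v₀ hv₀
end

section
/- Let G be a star-like graph with 1 branch (compact component K), let J be the Jacobi operator on ℓ²(V; ℂ) determined by Jacobi data (a, b) on G, and let W ⊆ ℓ²(V; ℂ) be a subspace with J(W) ⊆ W. If there exists v₀ ∈ K such that ψ(v₀) = 0 for every ψ ∈ W, then W is finite-dimensional, with dim_ℂ W ≤ |K|. Equivalently: if W is an infinite-dimensional J-invariant subspace of ℓ²(V; ℂ), then for every v ∈ K there exists ψ ∈ W with ψ(v) ≠ 0. -/
/-- Jacobi data on a graph `G`: bounded symmetric positive edge weights and a bounded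
potential. -/
structure JacobiData {V : Type*} (G : SimpleGraph V) where
  a : V → V → ℝ
  b : V → ℝ
  symm : ∀ u v, a u v = a v u
  pos : ∀ u v, G.Adj u v → 0 < a u v
  a_bdd : ∃ C, ∀ u v, G.Adj u v → |a u v| ≤ C
  b_bdd : ∃ C, ∀ v, |b v| ≤ C

section Aux

open SimpleGraph Finset

variable {V : Type*} (G : SimpleGraph V) (S : StarLike G 1) (D : JacobiData G) (v₀ : V)

/-- neighbor finset -/
noncomputable def nbr (v : V) : Finset V := (S.locFin v).toFinset

lemma mem_nbr {v w : V} : w ∈ nbr G S v ↔ G.Adj v w := by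
  simp [nbr, SimpleGraph.mem_neighborSet]

variable [DecidableEq V]

/-- growing support finsets -/
noncomputable def Fk : ℕ → Finset V
  | 0 => {v₀}
  | (k+1) => Fk k ∪ (Fk k).biUnion (nbr G S)

/-- formal iterates of J applied to δ_{v₀} -/
noncomputable def cf : ℕ → V → ℝ
  | 0, v => if v = v₀ then 1 else 0
  | (k+1), v => (∑ w ∈ nbr G S v, D.a v w * cf k w) + D.b v * cf k v

lemma Fk_subset_succ (k : ℕ) : Fk G S v₀ k ⊆ Fk G S v₀ (k+1) :=
  Finset.subset_union_left

lemma nbr_subset_Fk {k : ℕ} {v : V} (hv : v ∈ Fk G S v₀ k) :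
    nbr G S v ⊆ Fk G S v₀ (k+1) := fun w hw =>
  Finset.subset_union_right (Finset.mem_biUnion.mpr ⟨v, hv, hw⟩)

lemma cf_supp : ∀ k v, v ∉ Fk G S v₀ k → cf G S D v₀ k v = 0 := by
  intro k
  induction k with
  | zero =>
    intro v hv
    simp only [Fk, Finset.mem_singleton] at hv
    simp [cf, hv]
  | succ k ih =>
    intro v hv
    have hv1 : v ∉ Fk G S v₀ k := fun h => hv (Fk_subset_succ G S v₀ k h)
    have horr : ∀ w ∈ nbr G S v, cf G S D v₀ k w = 0 := by
      intro w hw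
      by_contra hne
      have hwF : w ∈ Fk G S v₀ k := by
        by_contra hwF; exact hne (ih w hwF)
      have : v ∈ nbr G S w := (mem_nbr G S).mpr ((mem_nbr G S).mp hw).symm
      exact hv (nbr_subset_Fk G S v₀ hwF this)
    simp only [cf]
    rw [Finset.sum_congr rfl (fun w hw => by rw [horr w hw, mul_zero]), ih v hv1]
    simp

lemma cf_dist_le (hconn : G.Connected) :
    ∀ k v, cf G S D v₀ k v ≠ 0 → G.dist v₀ v ≤ k := by
  intro k
  induction k with
  | zero =>
    intro v hv
    simp only [cf] at hv
    split_ifs at hv with h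
    · subst h; simp
    · exact absurd rfl hv
  | succ k ih =>
    intro v hv
    simp only [cf] at hv
    by_cases hb : D.b v * cf G S D v₀ k v ≠ 0
    · have := ih v (fun h => hb (by rw [h, mul_zero]))
      omega
    · push_neg at hb
      rw [hb, add_zero] at hv
      obtain ⟨w, hw, hne⟩ := Finset.exists_ne_zero_of_sum_ne_zero hv
      have hcw : cf G S D v₀ k w ≠ 0 := fun h => hne (by rw [h, mul_zero])
      have h1 := ih w hcw
      have hadj : G.Adj w v := ((mem_nbr G S).mp hw).symm
      have h2 : G.dist w v ≤ 1 := by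
        have := SimpleGraph.dist_le (SimpleGraph.Walk.cons hadj SimpleGraph.Walk.nil)
        simpa using this
      have := hconn.dist_triangle (u := v₀) (v := w) (w := v)
      omega

lemma cf_pos (hconn : G.Connected) :
    ∀ d v, G.dist v₀ v = d → 0 < cf G S D v₀ d v := by
  intro d
  induction d with
  | zero =>
    intro v hv
    have : v₀ = v := (hconn.dist_eq_zero_iff).mp hv
    subst this
    simp [cf]
  | succ d ih =>
    intro v hv
    have hvne : v ≠ v₀ := by
      intro h; subst h
      rw [(hconn.dist_eq_zero_iff (u := v) (v := v)).mpr rfl] at hv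
      omega
    -- every neighbor has dist ≥ d, and cf is nonneg on neighbors
    have hnbr_ge : ∀ w ∈ nbr G S v, d ≤ G.dist v₀ w := by
      intro w hw
      have hadj : G.Adj w v := ((mem_nbr G S).mp hw).symm
      have h2 : G.dist w v ≤ 1 := by
        have := SimpleGraph.dist_le (SimpleGraph.Walk.cons hadj SimpleGraph.Walk.nil)
        simpa using this
      have := hconn.dist_triangle (u := v₀) (v := w) (w := v)
      omega
    have hnn : ∀ w ∈ nbr G S v, 0 ≤ D.a v w * cf G S D v₀ d w := by
      intro w hw
      rcases eq_or_lt_of_le (hnbr_ge w hw) with h | h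
      · exact le_of_lt (mul_pos (D.pos v w ((mem_nbr G S).mp hw)) (ih w h.symm))
      · have : cf G S D v₀ d w = 0 := by
          by_contra hne
          have := cf_dist_le G S D v₀ hconn d w hne
          omega
        rw [this, mul_zero]
    -- exists a neighbor at distance exactly d
    obtain ⟨p, hp⟩ := (hconn.preconnected v₀ v).exists_walk_length_eq_dist
    obtain ⟨x, hx, q, hq⟩ := SimpleGraph.Walk.exists_eq_cons_of_ne hvne p.reverse
    have hlq : q.length = d := by
      have h1 : p.reverse.length = p.length := SimpleGraph.Walk.length_reverse p
      rw [hq] at h1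
      simp only [SimpleGraph.Walk.length_cons] at h1
      omega
    have hxd : G.dist v₀ x = d := by
      have hle : G.dist v₀ x ≤ d := by
        have := SimpleGraph.dist_le q.reverse
        rwa [SimpleGraph.Walk.length_reverse, hlq] at this
      have hx' : x ∈ nbr G S v := (mem_nbr G S).mpr hx
      exact le_antisymm hle (hnbr_ge x hx')
    have hxmem : x ∈ nbr G S v := (mem_nbr G S).mpr hx
    have hsum : 0 < ∑ w ∈ nbr G S v, D.a v w * cf G S D v₀ d w :=
      Finset.sum_pos' hnn ⟨x, hxmem, mul_pos (D.pos v x hx) (ih x hxd)⟩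
    have hcv : cf G S D v₀ d v = 0 := by
      by_contra hne
      have := cf_dist_le G S D v₀ hconn d v hne
      omega
    simp only [cf]
    rw [hcv, mul_zero, add_zero]
    exact hsum

end Aux

section Aux2

open SimpleGraph Finset

variable {V : Type*} (G : SimpleGraph V) (S : StarLike G 1) (D : JacobiData G) (v₀ : V)

lemma walk_len_ge (hv₀K : v₀ ∈ S.K) :
    ∀ n (j : ℕ) (p : G.Walk v₀ (S.φ 0 j)), p.length = n →
      G.dist v₀ (S.φ 0 0) + j ≤ n := by
  intro n
  induction n using Nat.strong_induction_on with
  | _ n ih =>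
    intro j p hp
    match j with
    | 0 =>
      have := SimpleGraph.dist_le p
      omega
    | (i+1) =>
      have hne : S.φ 0 (i+1) ≠ v₀ := by
        intro h
        have : S.φ 0 (i+1) ∈ S.K := h ▸ hv₀K
        have := (S.branch_inter_K 0 (i+1)).mp this
        omega
      obtain ⟨x, hx, q, hq⟩ := SimpleGraph.Walk.exists_eq_cons_of_ne hne p.reverse
      have hlen : n = q.length + 1 := by
        have h1 : p.reverse.length = p.length := SimpleGraph.Walk.length_reverse p
        rw [hq] at h1
        simp only [SimpleGraph.Walk.length_cons] at h1
        omega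
      have hxcases := (S.adj_branch 0 (i+1) (by omega) x).mp hx
      simp only [Nat.add_sub_cancel] at hxcases
      have hql : q.reverse.length = q.length := SimpleGraph.Walk.length_reverse q
      rcases hxcases with h | h
      · subst h
        have := ih q.length (by omega) i q.reverse hql
        omega
      · subst h
        have := ih q.length (by omega) (i+2) q.reverse hql
        omega

lemma branch_adj (j : ℕ) : G.Adj (S.φ 0 j) (S.φ 0 (j+1)) := by
  have := (S.adj_branch 0 (j+1) (by omega) (S.φ 0 j)).mpr
  exact (this (Or.inl (by simp))).symm

lemma branch_walk (j : ℕ) : ∃ p : G.Walk (S.φ 0 0) (S.φ 0 j), p.length = j := by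
  induction j with
  | zero => exact ⟨SimpleGraph.Walk.nil, rfl⟩
  | succ j ih =>
    obtain ⟨p, hp⟩ := ih
    exact ⟨p.concat (branch_adj G S j), by simp [SimpleGraph.Walk.length_concat, hp]⟩

lemma dist_branch (hv₀K : v₀ ∈ S.K) (j : ℕ) :
    G.dist v₀ (S.φ 0 j) = G.dist v₀ (S.φ 0 0) + j := by
  apply le_antisymm
  · obtain ⟨p₀, hp₀⟩ := (S.connected.preconnected v₀ (S.φ 0 0)).exists_walk_length_eq_dist
    obtain ⟨p, hp⟩ := branch_walk G S j
    have := SimpleGraph.dist_le (p₀.append p)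
    rwa [SimpleGraph.Walk.length_append, hp₀, hp] at this
  · obtain ⟨p, hp⟩ := (S.connected.preconnected v₀ (S.φ 0 j)).exists_walk_length_eq_dist
    exact hp ▸ walk_len_ge G S v₀ hv₀K p.length j p rfl

variable [DecidableEq V]

lemma cf_branch_zero (hv₀K : v₀ ∈ S.K) {k n : ℕ}
    (h : k < G.dist v₀ (S.φ 0 0) + n) : cf G S D v₀ k (S.φ 0 n) = 0 := by
  by_contra hne
  have := cf_dist_le G S D v₀ S.connected k _ hne
  rw [dist_branch G S v₀ hv₀K n] at this
  omega

end Aux2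

section Aux3

open SimpleGraph Finset

variable {V : Type*} [DecidableEq V] (G : SimpleGraph V) (S : StarLike G 1) (D : JacobiData G)
  (v₀ : V)

lemma iter_apply (J : lp (fun _ : V => ℂ) 2 →L[ℂ] lp (fun _ : V => ℂ) 2)
    (hJ : ∀ (ψ : lp (fun _ : V => ℂ) 2) (v : V),
      J ψ v = (∑ w ∈ (S.locFin v).toFinset, (D.a v w : ℂ) * ψ w) + (D.b v : ℂ) * ψ v) :
    ∀ (k : ℕ) (ψ : lp (fun _ : V => ℂ) 2),
      (⇑J)^[k] ψ v₀ = ∑ u ∈ Fk G S v₀ k, (cf G S D v₀ k u : ℂ) * ψ u := by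
  intro k
  induction k with
  | zero =>
    intro ψ
    simp [Fk, cf]
  | succ k ih =>
    intro ψ
    rw [Function.iterate_succ_apply, ih (J ψ)]
    have hnbr : ∀ v : V, (S.locFin v).toFinset = nbr G S v := fun v => rfl
    simp only [fun u => hJ ψ u, hnbr]
    set T := Fk G S v₀ (k+1) with hT
    have hTsub : Fk G S v₀ k ⊆ T := Fk_subset_succ G S v₀ k
    have hczero : ∀ u : V, u ∉ T → cf G S D v₀ k u = 0 := fun u hu =>
      cf_supp G S D v₀ k u (fun h => hu (hTsub h))
    -- split LHS
    have step1 : ∑ u ∈ Fk G S v₀ k, (cf G S D v₀ k u : ℂ) *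
          ((∑ w ∈ nbr G S u, (D.a u w : ℂ) * ψ w) + (D.b u : ℂ) * ψ u)
        = (∑ u ∈ Fk G S v₀ k, ∑ w ∈ nbr G S u,
            (cf G S D v₀ k u : ℂ) * ((D.a u w : ℂ) * ψ w))
          + ∑ u ∈ Fk G S v₀ k, (cf G S D v₀ k u : ℂ) * ((D.b u : ℂ) * ψ u) := by
      rw [← Finset.sum_add_distrib]
      exact Finset.sum_congr rfl fun u _ => by rw [mul_add, Finset.mul_sum]
    rw [step1]
    -- extend both sums to T
    have step2 : ∑ u ∈ Fk G S v₀ k, (cf G S D v₀ k u : ℂ) * ((D.b u : ℂ) * ψ u)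
        = ∑ u ∈ T, (cf G S D v₀ k u : ℂ) * ((D.b u : ℂ) * ψ u) := by
      apply Finset.sum_subset hTsub
      intro u _ hu
      rw [cf_supp G S D v₀ k u hu]
      simp
    have step3 : ∑ u ∈ Fk G S v₀ k, ∑ w ∈ nbr G S u,
          (cf G S D v₀ k u : ℂ) * ((D.a u w : ℂ) * ψ w)
        = ∑ u ∈ T, ∑ w ∈ nbr G S u, (cf G S D v₀ k u : ℂ) * ((D.a u w : ℂ) * ψ w) := by
      apply Finset.sum_subset hTsub
      intro u _ hu
      rw [cf_supp G S D v₀ k u hu]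
      simp
    rw [step2, step3]
    -- turn inner sums into sums over T with an indicator
    have step4 : ∑ u ∈ T, ∑ w ∈ nbr G S u, (cf G S D v₀ k u : ℂ) * ((D.a u w : ℂ) * ψ w)
        = ∑ u ∈ T, ∑ w ∈ T, (if w ∈ nbr G S u then
            (cf G S D v₀ k u : ℂ) * ((D.a u w : ℂ) * ψ w) else 0) := by
      apply Finset.sum_congr rfl
      intro u _
      by_cases hcf : cf G S D v₀ k u = 0
      · simp [hcf]
      · have huF : u ∈ Fk G S v₀ k := by
          by_contra h; exact hcf (cf_supp G S D v₀ k u h)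
        have hsub : nbr G S u ⊆ T := nbr_subset_Fk G S v₀ huF
        rw [Finset.sum_ite_mem, Finset.inter_eq_right.mpr hsub]
    rw [step4, Finset.sum_comm]
    -- flip the adjacency condition
    have step5 : ∑ w ∈ T, ∑ u ∈ T, (if w ∈ nbr G S u then
            (cf G S D v₀ k u : ℂ) * ((D.a u w : ℂ) * ψ w) else 0)
        = ∑ w ∈ T, ∑ u ∈ T, (if u ∈ nbr G S w then
            (cf G S D v₀ k u : ℂ) * ((D.a u w : ℂ) * ψ w) else 0) := by
      apply Finset.sum_congr rfl; intro w _
      apply Finset.sum_congr rfl; intro u _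
      refine if_congr ?_ rfl rfl
      rw [mem_nbr, mem_nbr, G.adj_comm]
    rw [step5]
    -- contract inner sums back to neighborhoods
    have step6 : ∑ w ∈ T, ∑ u ∈ T, (if u ∈ nbr G S w then
            (cf G S D v₀ k u : ℂ) * ((D.a u w : ℂ) * ψ w) else 0)
        = ∑ w ∈ T, ∑ u ∈ nbr G S w, (cf G S D v₀ k u : ℂ) * ((D.a u w : ℂ) * ψ w) := by
      apply Finset.sum_congr rfl
      intro w _
      rw [Finset.sum_ite_mem]
      apply Finset.sum_subset Finset.inter_subset_right
      intro u hu hnotin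
      have huT : u ∉ T := fun h => hnotin (Finset.mem_inter.mpr ⟨h, hu⟩)
      rw [hczero u huT]
      simp
    rw [step6, ← Finset.sum_add_distrib]
    -- collect
    apply Finset.sum_congr rfl
    intro w _
    simp only [cf]
    push_cast
    rw [add_mul, Finset.sum_mul]
    congr 1
    · apply Finset.sum_congr rfl
      intro u _
      rw [show D.a u w = D.a w u from D.symm u w]
      ring
    · ring

end Aux3

section Main

open SimpleGraph Finset

/-- Core vanishing lemma: an element of a `J`-invariant subspace all of whose iterates
vanish at `v₀` and which vanishes on `K` must vanish everywhere. -/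
lemma key_vanish {V : Type*} [DecidableEq V] (G : SimpleGraph V) (S : StarLike G 1)
    (D : JacobiData G)
    (J : lp (fun _ : V => ℂ) 2 →L[ℂ] lp (fun _ : V => ℂ) 2)
    (hJ : ∀ (ψ : lp (fun _ : V => ℂ) 2) (v : V),
      J ψ v = (∑ w ∈ (S.locFin v).toFinset, (D.a v w : ℂ) * ψ w) + (D.b v : ℂ) * ψ v)
    (W : Submodule ℂ (lp (fun _ : V => ℂ) 2)) (hW : ∀ ψ ∈ W, J ψ ∈ W)
    (v₀ : V) (hv₀ : v₀ ∈ S.K) (hvan : ∀ ψ ∈ W, ψ v₀ = 0)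
    (ψ : lp (fun _ : V => ℂ) 2) (hψ : ψ ∈ W) (hK : ∀ v ∈ S.K, ψ v = 0) :
    ∀ v : V, ψ v = 0 := by
  have hiter : ∀ k, (⇑J)^[k] ψ ∈ W := by
    intro k
    induction k with
    | zero => exact hψ
    | succ k ih => rw [Function.iterate_succ_apply']; exact hW _ ih
  have hzero : ∀ k, ∑ u ∈ Fk G S v₀ k, (cf G S D v₀ k u : ℂ) * ψ u = 0 := fun k => by
    rw [← iter_apply G S D v₀ J hJ k ψ]
    exact hvan _ (hiter k)
  have hbranch : ∀ j, ψ (S.φ 0 j) = 0 := by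
    intro j
    induction j using Nat.strong_induction_on with
    | _ j ih =>
      set k := G.dist v₀ (S.φ 0 0) + j with hk
      have h0 := hzero k
      have hsum : ∑ u ∈ Fk G S v₀ k, (cf G S D v₀ k u : ℂ) * ψ u
          = (cf G S D v₀ k (S.φ 0 j) : ℂ) * ψ (S.φ 0 j) := by
        apply Finset.sum_eq_single (S.φ 0 j)
        · intro u hu hne
          rcases S.cover u with hK' | ⟨i, n, rfl⟩
          · rw [hK u hK', mul_zero]
          · have hi : i = 0 := Subsingleton.elim _ _
            subst hi
            rcases lt_trichotomy n j with h | h | h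
            · rw [ih n h, mul_zero]
            · exact absurd (by rw [h]) hne
            · rw [cf_branch_zero G S D v₀ hv₀ (by omega)]
              simp
        · intro hnot
          rw [cf_supp G S D v₀ k _ hnot]
          simp
      rw [hsum] at h0
      have hcpos : 0 < cf G S D v₀ k (S.φ 0 j) :=
        cf_pos G S D v₀ S.connected k _ (dist_branch G S v₀ hv₀ j)
      have : (cf G S D v₀ k (S.φ 0 j) : ℂ) ≠ 0 := by
        exact_mod_cast hcpos.ne'
      exact (mul_eq_zero.mp h0).resolve_left this
  intro v
  rcases S.cover v with hK' | ⟨i, n, rfl⟩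
  · exact hK v hK'
  · have hi : i = 0 := Subsingleton.elim _ _
    subst hi
    exact hbranch n


/-- Let `G` be a star-like graph with one branch and compact component `K`,
`J` the Jacobi operator on `ℓ²(V; ℂ)` determined by Jacobi data `(a, b)`, and
`W ⊆ ℓ²(V; ℂ)` a `J`-invariant subspace. If there is `v₀ ∈ K` such that `ψ(v₀) = 0` for
every `ψ ∈ W`, then `W` is finite-dimensional with `dim_ℂ W ≤ |K|`. -/
theorem stmt_6 {V : Type*} (G : SimpleGraph V) (S : StarLike G 1) (D : JacobiData G)
    (J : lp (fun _ : V => ℂ) 2 →L[ℂ] lp (fun _ : V => ℂ) 2)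
    (hJ : ∀ (ψ : lp (fun _ : V => ℂ) 2) (v : V),
      J ψ v = (∑ w ∈ (S.locFin v).toFinset, (D.a v w : ℂ) * ψ w) + (D.b v : ℂ) * ψ v)
    (W : Submodule ℂ (lp (fun _ : V => ℂ) 2)) (hW : ∀ ψ ∈ W, J ψ ∈ W)
    (v₀ : V) (hv₀ : v₀ ∈ S.K) (hvan : ∀ ψ ∈ W, ψ v₀ = 0) :
    FiniteDimensional ℂ W ∧ Module.finrank ℂ W ≤ S.K.card := by
  classical
  let T : W →ₗ[ℂ] (↥S.K → ℂ) :=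
    { toFun := fun ψ v => (ψ : lp (fun _ : V => ℂ) 2) v.1
      map_add' := by
        intro x y
        funext v
        simp [lp.coeFn_add]
      map_smul' := by
        intro c x
        funext v
        simp [lp.coeFn_smul] }
  have hinj : Function.Injective T := by
    rw [injective_iff_map_eq_zero]
    intro x hx0
    have hK : ∀ v ∈ S.K, (x : lp (fun _ : V => ℂ) 2) v = 0 := by
      intro v hv
      have := congrFun hx0 ⟨v, hv⟩
      exact this
    have hall := key_vanish G S D J hJ W hW v₀ hv₀ hvan x.1 x.2 hK
    apply Subtype.ext
    apply lp.ext
    funext v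
    simpa using hall v
  haveI : FiniteDimensional ℂ W := FiniteDimensional.of_injective T hinj
  refine ⟨inferInstance, ?_⟩
  calc Module.finrank ℂ W ≤ Module.finrank ℂ (↥S.K → ℂ) :=
        LinearMap.finrank_le_finrank_of_injective hinj
    _ = S.K.card := by rw [Module.finrank_pi]; exact Fintype.card_coe _

end Main
end

section
/- Let G be a star-like graph with m ≥ 2 branches, with compact component K and branch images L_1, …, L_m, and let J be the Jacobi operator on ℓ²(V; ℂ) determined by Jacobi data (a, b) on G. Fix 1 ≤ i ≤ m, and let W ⊆ ℓ²(V; ℂ) be a subspace with J(W) ⊆ W such that every ψ ∈ W vanishes identically on ⋃_{j ≠ i} L_j (in particular ψ(φ_j(0)) = 0 for all j ≠ i). Then W is finite-dimensional. -/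
namespace SimpleGraph

variable {V : Type*} {G : SimpleGraph V} {u v w : V}

theorem Adj.dist_le_dist_add_one_s7 (hadj : G.Adj u w) (v : V) : G.dist u v ≤ G.dist w v + 1 := by
  have := hadj.reachable.dist_triangle_left v
  rw [dist_eq_one_iff_adj.mpr hadj] at this
  omega

theorem Reachable.exists_adj_dist_eq {k : ℕ} (hr : G.Reachable u v) (hk : G.dist u v = k + 1) :
    ∃ w, G.Adj u w ∧ G.Reachable w v ∧ G.dist w v = k := by
  obtain ⟨p, hp⟩ := hr.exists_walk_length_eq_dist
  cases p with
  | nil => simp at hk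
  | @cons _ w _ hadj q =>
    have hq : q.length = k := by simp only [Walk.length_cons] at hp; omega
    have := hadj.dist_le_dist_add_one_s7 v
    have := dist_le q
    exact ⟨w, hadj, q.reachable, by omega⟩

variable (G) [G.LocallyFinite]

/-- The Jacobi operator, acting on all functions `V → ℂ` rather than on `ℓ²`. -/
noncomputable def jacobiAction (a : V → V → ℝ) (b : V → ℝ) (f : V → ℂ) (u : V) : ℂ :=
  ∑ w ∈ G.neighborFinset u, (a u w : ℂ) * f w + (b u : ℂ) * f u

variable {G} {a : V → V → ℝ} {b : V → ℝ}

theorem jacobiAction_iterate_apply_eq_zero {k : ℕ} {f : V → ℂ}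
    (hf : ∀ v, G.dist u v ≤ k → f v = 0) : (jacobiAction G a b)^[k] f u = 0 := by
  induction k generalizing u with
  | zero => exact hf u (by simp)
  | succ k ih =>
    rw [Function.iterate_succ_apply', jacobiAction,
      ih fun v hv => hf v (by omega), mul_zero, add_zero]
    refine Finset.sum_eq_zero fun w hw => ?_
    have hadj := (mem_neighborFinset G u w).mp hw
    rw [ih fun v hv => hf v (by have := hadj.dist_le_dist_add_one_s7 v; omega), mul_zero]

/-- The constant `c` is the total weight of the geodesics from `u` to `v₀`. -/
theorem exists_pos_jacobiAction_iterate_apply_eq_mul (ha : ∀ u v, G.Adj u v → 0 < a u v)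
    {k : ℕ} {v₀ : V} (hr : G.Reachable u v₀) (hk : G.dist u v₀ = k) :
    ∃ c : ℝ, 0 < c ∧ ∀ f : V → ℂ, (∀ v, G.dist u v ≤ k → v ≠ v₀ → f v = 0) →
      (jacobiAction G a b)^[k] f u = c * f v₀ := by
  classical
  induction k generalizing u with
  | zero =>
    obtain rfl := hr.dist_eq_zero_iff.mp hk
    exact ⟨1, one_pos, fun f _ => by simp⟩
  | succ k ih =>
    have ih' : ∀ w, G.Reachable w v₀ → G.dist w v₀ = k → ∃ c : ℝ, 0 < c ∧ ∀ f : V → ℂ,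
        (∀ v, G.dist w v ≤ k → v ≠ v₀ → f v = 0) → (jacobiAction G a b)^[k] f w = c * f v₀ :=
      fun w => @ih w
    choose! c hc hcf using ih'
    set N := (G.neighborFinset u).filter fun w => G.Reachable w v₀ ∧ G.dist w v₀ = k
    refine ⟨∑ w ∈ N, a u w * c w, ?_, fun f hf => ?_⟩
    · obtain ⟨w, hadj, hwr, hwk⟩ := hr.exists_adj_dist_eq hk
      refine Finset.sum_pos (fun w hw => ?_) ⟨w, by simp [N, hadj, hwr, hwk]⟩
      simp only [N, Finset.mem_filter, mem_neighborFinset] at hw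
      exact mul_pos (ha u w hw.1) (hc w hw.2.1 hw.2.2)
    have hu : (jacobiAction G a b)^[k] f u = 0 :=
      jacobiAction_iterate_apply_eq_zero fun v hv => hf v (by omega) (by rintro rfl; omega)
    have hnbr : ∀ w ∈ G.neighborFinset u, (a u w : ℂ) * (jacobiAction G a b)^[k] f w =
        if G.Reachable w v₀ ∧ G.dist w v₀ = k then ((a u w * c w : ℝ) : ℂ) * f v₀ else 0 := by
      intro w hw
      have hadj := (mem_neighborFinset G u w).mp hw
      have hf' : ∀ v, G.dist w v ≤ k → v ≠ v₀ → f v = 0 := fun v hv =>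
        hf v (by have := hadj.dist_le_dist_add_one_s7 v; omega)
      split_ifs with hw₀
      · rw [hcf w hw₀.1 hw₀.2 f hf']
        push_cast
        ring
      · have hwk : k < G.dist w v₀ := by
          have hne : G.dist w v₀ ≠ k := fun h => hw₀ ⟨hadj.symm.reachable.trans hr, h⟩
          have := hadj.dist_le_dist_add_one_s7 v₀
          omega
        rw [jacobiAction_iterate_apply_eq_zero fun v hv => hf' v hv (by rintro rfl; omega),
          mul_zero]
    rw [Function.iterate_succ_apply', jacobiAction, hu, mul_zero, add_zero,
      Finset.sum_congr rfl hnbr, ← Finset.sum_filter, Complex.ofReal_sum, Finset.sum_mul]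

end SimpleGraph

namespace StarLike

open SimpleGraph

variable {V : Type*} {G : SimpleGraph V} {m : ℕ} (S : StarLike G m)

/-- A walk entering branch `i` from outside its part beyond `φ i n` must pass through `φ i n`. -/
theorem dist_φ_lt_length (i : Fin m) (n : ℕ) {u : V} (hu : ∀ l, n + 1 ≤ l → u ≠ S.φ i l)
    (p : G.Walk u (S.φ i (n + 1))) : G.dist u (S.φ i n) < p.length := by
  generalize hx : S.φ i (n + 1) = x at p
  induction p with
  | nil => exact absurd hx.symm (hu (n + 1) le_rfl)
  | @cons u w x hadj q ih =>
    rw [Walk.length_cons]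
    by_cases hw : ∀ l, n + 1 ≤ l → w ≠ S.φ i l
    · have := hadj.dist_le_dist_add_one_s7 (S.φ i n)
      have := ih hw hx
      omega
    push Not at hw
    obtain ⟨l, hl, rfl⟩ := hw
    rcases (S.adj_branch i l (by omega) u).mp hadj.symm with rfl | rfl
    · obtain rfl : l = n + 1 := by
        by_contra
        exact hu (l - 1) (by omega) rfl
      simp
    · exact absurd rfl (hu (l + 1) (by omega))

theorem strictMono_dist_φ {i : Fin m} {u : V} (hu : ∀ l, u ≠ S.φ i l) :
    StrictMono fun n => G.dist u (S.φ i n) :=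
  strictMono_nat_of_lt_succ fun n => by
    obtain ⟨p, hp⟩ := S.connected.exists_walk_length_eq_dist u (S.φ i (n + 1))
    exact hp ▸ S.dist_φ_lt_length i n (fun l _ => hu l) p

theorem eq_zero_of_jacobiAction_iterate_eq_zero [G.LocallyFinite] {a : V → V → ℝ} {b : V → ℝ}
    (ha : ∀ u v, G.Adj u v → 0 < a u v) {i : Fin m} {u₀ : V} (hu₀ : ∀ n, u₀ ≠ S.φ i n)
    {ψ : V → ℂ} (hK : ∀ v ∈ S.K, ψ v = 0) (hbranch : ∀ j ≠ i, ∀ n, ψ (S.φ j n) = 0)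
    (hiter : ∀ k, (jacobiAction G a b)^[k] ψ u₀ = 0) : ψ = 0 := by
  have hoff : ∀ v, (∀ n, v = S.φ i n → ψ v = 0) → ψ v = 0 := by
    intro v hv
    rcases S.cover v with hvK | ⟨j, n, rfl⟩
    · exact hK v hvK
    by_cases hj : j = i
    · subst hj
      exact hv n rfl
    · exact hbranch j hj n
  have hi : ∀ n, ψ (S.φ i n) = 0 := by
    intro n
    induction n using Nat.strong_induction_on with
    | _ n ih =>
      obtain ⟨c, hc, hcf⟩ := exists_pos_jacobiAction_iterate_apply_eq_mul (b := b) ha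
        (S.connected u₀ (S.φ i n)) rfl
      have hψ := hcf ψ fun v hv hne => hoff v fun r hr => by
        subst hr
        rcases lt_trichotomy r n with hr | rfl | hr
        · exact ih r hr
        · exact absurd rfl hne
        · exact absurd hv (S.strictMono_dist_φ hu₀ hr).not_ge
      rw [hiter] at hψ
      exact (mul_eq_zero.mp hψ.symm).resolve_left (Complex.ofReal_ne_zero.mpr hc.ne')
  funext v
  exact hoff v fun n hn => hn ▸ hi n

end StarLike

/-- Let `G` be a star-like graph with `m ≥ 2` branches, `J` the Jacobi
operator on `ℓ²(V; ℂ)` determined by Jacobi data `(a, b)`, `i` a branch index, and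
`W ⊆ ℓ²(V; ℂ)` a `J`-invariant subspace all of whose elements vanish identically on
`⋃_{j ≠ i} L_j` (in particular at `φ j 0` for all `j ≠ i`). Then `W` is
finite-dimensional. -/
theorem stmt_7 {V : Type*} (G : SimpleGraph V) (m : ℕ) (hm : 2 ≤ m)
    (S : StarLike G m) (D : JacobiData G)
    (J : lp (fun _ : V => ℂ) 2 →L[ℂ] lp (fun _ : V => ℂ) 2)
    (hJ : ∀ (ψ : lp (fun _ : V => ℂ) 2) (v : V),
      J ψ v = (∑ w ∈ (S.locFin v).toFinset, (D.a v w : ℂ) * ψ w) + (D.b v : ℂ) * ψ v)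
    (i : Fin m) (W : Submodule ℂ (lp (fun _ : V => ℂ) 2)) (hW : ∀ ψ ∈ W, J ψ ∈ W)
    (hvan : ∀ ψ ∈ W, ∀ j : Fin m, j ≠ i → ∀ n : ℕ, ψ (S.φ j n) = 0) :
    FiniteDimensional ℂ W := by
  let _ : G.LocallyFinite := fun v => (S.locFin v).fintype
  have hJT : Function.Semiconj (⇑) J (G.jacobiAction D.a D.b) := fun ψ => funext (hJ ψ)
  have := Fin.nontrivial_iff_two_le.mpr hm
  obtain ⟨j, hji⟩ := exists_ne i
  let restrict : W →ₗ[ℂ] S.K → ℂ :=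
    (LinearMap.pi fun v : S.K => lp.evalₗ (fun _ : V => ℂ) 2 (v : V)) ∘ₗ W.subtype
  refine FiniteDimensional.of_injective restrict
    (LinearMap.ker_eq_bot.mp (eq_bot_iff.mpr fun ψ hψ => ?_))
  have hψ : ⇑(ψ : lp (fun _ : V => ℂ) 2) = 0 :=
    S.eq_zero_of_jacobiAction_iterate_eq_zero D.pos (fun n => S.branch_disjoint j i hji 0 n)
      (fun v hv => congrFun hψ ⟨v, hv⟩) (hvan ψ ψ.2) fun k => by
        rw [← hJT.iterate_right k]
        exact hvan _ (Set.MapsTo.iterate hW k ψ.2) j hji 0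
  exact (Submodule.mem_bot ℂ).mpr (Subtype.ext (lp.ext hψ))
end

section
/- Let G be a star-like graph with m branches, with compact component K, and let J be the Jacobi operator on ℓ²(V; ℂ) determined by Jacobi data (a, b) on G. Then the set {δ_v : v ∈ K} is cyclic for J: the closure of the linear span of { Jᵏ δ_v : k ∈ ℕ ∪ {0}, v ∈ K } equals ℓ²(V; ℂ). -/
theorem lp.eq_top_of_forall_single_one_mem {ι 𝕜 : Type*} [DecidableEq ι] [NormedField 𝕜]
    {p : ENNReal} [Fact (1 ≤ p)] (hp : p ≠ ⊤) {M : Submodule 𝕜 (lp (fun _ : ι => 𝕜) p)}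
    (hM : IsClosed (M : Set (lp (fun _ : ι => 𝕜) p))) (hsingle : ∀ i, lp.single p i 1 ∈ M) :
    M = ⊤ := by
  refine Submodule.eq_top_iff'.mpr fun f => hM.mem_of_tendsto (lp.hasSum_single hp f) ?_
  refine Filter.Eventually.of_forall fun s => M.sum_mem fun i _ => ?_
  simpa [← lp.single_smul] using M.smul_mem (f i) (hsingle i)

namespace StarLike

variable {V : Type*} {G : SimpleGraph V} {m : ℕ} (S : StarLike G m)

theorem adj_succ (i : Fin m) (n : ℕ) : G.Adj (S.φ i n) (S.φ i (n + 1)) :=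
  ((S.adj_branch i (n + 1) n.succ_pos _).mpr (Or.inl rfl)).symm

theorem forall_of_propagate {P : V → Prop} (hK : ∀ v ∈ S.K, P v)
    (hprop : ∀ u t, G.Adj u t → P u → (∀ w, G.Adj u w → w ≠ t → P w) → P t) (v : V) : P v := by
  rcases S.cover v with hv | ⟨i, n, rfl⟩
  · exact hK v hv
  induction n using Nat.twoStepInduction with
  | zero => exact hK _ ((S.branch_inter_K i 0).mpr rfl)
  | one =>
    refine hprop _ _ (S.adj_succ i 0) (hK _ ((S.branch_inter_K i 0).mpr rfl)) fun w hw hne => ?_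
    exact hK w ((S.adj_base i w hw).resolve_right hne)
  | more n h₀ h₁ =>
    refine hprop _ _ (S.adj_succ i (n + 1)) h₁ fun w hw hne => ?_
    rcases (S.adj_branch i (n + 1) n.succ_pos w).mp hw with rfl | rfl
    · exact h₀
    · exact absurd rfl hne

end StarLike

namespace JacobiData

variable {V : Type*} [DecidableEq V] {G : SimpleGraph V} (D : JacobiData G)
  {hfin : ∀ v, (G.neighborSet v).Finite} {J : lp (fun _ : V => ℂ) 2 →L[ℂ] lp (fun _ : V => ℂ) 2}

theorem apply_single
    (hJ : ∀ (ψ : lp (fun _ : V => ℂ) 2) (v : V),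
      J ψ v = (∑ w ∈ (hfin v).toFinset, (D.a v w : ℂ) * ψ w) + (D.b v : ℂ) * ψ v) (u : V) :
    J (lp.single 2 u 1) =
      ∑ w ∈ (hfin u).toFinset, (D.a u w : ℂ) • lp.single 2 w 1 + (D.b u : ℂ) • lp.single 2 u 1 := by
  classical
  ext v
  simp only [hJ, lp.coeFn_add, Pi.add_apply, lp.coeFn_sum, Finset.sum_apply, lp.coeFn_smul,
    Pi.smul_apply, lp.single_apply, Pi.single_apply, smul_eq_mul, mul_ite, mul_one, mul_zero,
    Finset.sum_ite_eq, Finset.sum_ite_eq', Set.Finite.mem_toFinset, SimpleGraph.mem_neighborSet]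
  rw [G.adj_comm, D.symm]
  rcases eq_or_ne v u with rfl | h <;> simp [*]

theorem single_mem_of_adj
    (hJ : ∀ (ψ : lp (fun _ : V => ℂ) 2) (v : V),
      J ψ v = (∑ w ∈ (hfin v).toFinset, (D.a v w : ℂ) * ψ w) + (D.b v : ℂ) * ψ v)
    {M : Submodule ℂ (lp (fun _ : V => ℂ) 2)} (hM : Set.MapsTo J M M) {u t : V} (hut : G.Adj u t)
    (hu : lp.single 2 u 1 ∈ M) (hw : ∀ w, G.Adj u w → w ≠ t → lp.single 2 w 1 ∈ M) :
    lp.single 2 t 1 ∈ M := by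
  have ht : t ∈ (hfin u).toFinset := by simpa using hut
  have hsolve : (D.a u t : ℂ) • lp.single 2 t 1 = J (lp.single 2 u 1) -
      (D.b u : ℂ) • lp.single 2 u 1 -
      ∑ w ∈ (hfin u).toFinset.erase t, (D.a u w : ℂ) • lp.single 2 w 1 := by
    rw [D.apply_single hJ, ← Finset.add_sum_erase _ _ ht]
    abel
  have hat : (D.a u t : ℂ) ≠ 0 := by exact_mod_cast (D.pos u t hut).ne'
  refine (M.smul_mem_iff hat).mp ?_
  rw [hsolve]
  refine M.sub_mem (M.sub_mem (hM hu) (M.smul_mem _ hu)) (M.sum_mem fun w hw' => ?_)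
  obtain ⟨hwt, hw'⟩ := Finset.mem_erase.mp hw'
  exact M.smul_mem _ (hw w (by simpa using hw') hwt)

end JacobiData

/-- Let `G` be a star-like graph with `m` branches and compact component
`K`, and `J` the Jacobi operator on `ℓ²(V; ℂ)` determined by Jacobi data `(a, b)`. Then
`{δ_v : v ∈ K}` is a cyclic set for `J`: the closure of the span of
`{Jᵏ δ_v : k ≥ 0, v ∈ K}` is all of `ℓ²(V; ℂ)`. -/
theorem stmt_13 {V : Type*} [DecidableEq V] (G : SimpleGraph V) (m : ℕ)
    (S : StarLike G m) (D : JacobiData G)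
    (J : lp (fun _ : V => ℂ) 2 →L[ℂ] lp (fun _ : V => ℂ) 2)
    (hJ : ∀ (ψ : lp (fun _ : V => ℂ) 2) (v : V),
      J ψ v = (∑ w ∈ (S.locFin v).toFinset, (D.a v w : ℂ) * ψ w) + (D.b v : ℂ) * ψ v) :
    (Submodule.span ℂ
        {ψ : lp (fun _ : V => ℂ) 2 |
          ∃ (k : ℕ) (v : V), v ∈ S.K ∧ ψ = (J ^ k) (lp.single 2 v 1)}).topologicalClosure =
      ⊤ := by
  set N := Submodule.span ℂ
    {ψ : lp (fun _ : V => ℂ) 2 | ∃ (k : ℕ) (v : V), v ∈ S.K ∧ ψ = (J ^ k) (lp.single 2 v 1)}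
  have hJN : Set.MapsTo J N N := (Submodule.span_le (p := N.comap J.toLinearMap)).mpr <| by
    rintro _ ⟨k, v, hv, rfl⟩
    exact Submodule.subset_span ⟨k + 1, v, hv, by rw [pow_succ']; rfl⟩
  have hK : ∀ v ∈ S.K, lp.single 2 v 1 ∈ N.topologicalClosure := fun v hv =>
    N.le_topologicalClosure (Submodule.subset_span ⟨0, v, hv, by simp⟩)
  exact lp.eq_top_of_forall_single_one_mem (by norm_num) N.isClosed_topologicalClosure
    (S.forall_of_propagate hK fun _ _ hut hu hw =>
      D.single_mem_of_adj hJ (hJN.closure J.continuous) hut hu hw)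
end
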